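/- arXiv:2012.03244 — 5 statements merged into one kernel-verified Lean document; each statement's English description precedes it below -/
import Mathlib

section
/- Let G_b, G_r ≥ 0, σ² > 0, γ ≥ 0, ε ∈ (0, 1), P_max > 0, and fix φ₁, N > 0 with φ₁ ≠ N. Suppose P_r, P_b > 0 satisfy P_r + P_b ≤ P_max, P_r ≥ P_b, P_r·G_r ≥ γ·(P_b·G_r + σ²), and F_dl(P_r, P_b) ≥ 1 − ε. Then P_r' := P_max − P_b also satisfies P_r' ≥ P_b, P_r' + P_b = P_max, P_r'·G_r ≥ γ·(P_b·G_r + σ²), and F_dl(P_r', P_b) ≥ 1 − ε, while the objective Real.logb 2 (1 + P_b·G_b/σ²) is unchanged. Consequently, whenever problem (P2) attains its maximum, it attains it at a point with P_r + P_b = P_max. -/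
open Real

/-- The closed-form minimum average detection error probability of Theorem 2 of the paper
(eq. (19)). -/
noncomputable def Fdl (Pr Pb φ1 N : ℝ) : ℝ :=
  ((Pr + Pb) / Pr) ^ (-(1 + Pr * N / (Pb * φ1))) / (Pb * φ1 / (Pr * N) + 1) + 1 -
    ((Pr + Pb) / Pr) ^ (-(Pr * N / (Pb * φ1))) -
    ((Pb / Pr) * ((Pr + Pb) / Pr) ^ (-((Pr + Pb) / Pb)) / (φ1 / N - 1)) *
      (((Pr + Pb) / Pr) ^ ((Pr / Pb) * (1 - N / φ1)) - 1)

/-- The feasible set of the transmit power optimization problem (P2) of the paper. -/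
def FeasibleP2 (Gr σ2 γ ε Pmax φ1 N : ℝ) (p : ℝ × ℝ) : Prop :=
  0 < p.1 ∧ 0 < p.2 ∧ p.1 + p.2 ≤ Pmax ∧ p.2 ≤ p.1 ∧
    γ * (p.2 * Gr + σ2) ≤ p.1 * Gr ∧ 1 - ε ≤ Fdl p.1 p.2 φ1 N

/-!
Only `P_r` changes: the objective depends on `P_b` alone and the QoS constraint is monotone in
`P_r` because `G_r ≥ 0`, so everything rests on `F_dl` being increasing in `P_r`.
With `t = P_b / P_r` and `a = N / φ₁`, the quantity `1 - F_dl` equals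
`∫₀^∞ e^{-s} S_a((s + log (1 + t)) / t) ds`, where `S_a` is the survival function of the sum of
independent exponential variables of rates `1` and `a`. Since `S_a` is antitone and
`log (1 + t) / t` decreases (Bernoulli's inequality), `1 - F_dl` increases with `t`, i.e.
decreases as `P_r` grows.
-/

open MeasureTheory Set

/-- Survival function `u ↦ P(X + Y > u)` of the sum of independent exponential random variables
of rates `1` and `a`. -/
noncomputable def hypoexpSurvival (a u : ℝ) : ℝ :=
  (exp (-(a * u)) - a * exp (-u)) / (1 - a)

lemma hypoexpSurvival_antitoneOn {a : ℝ} (ha : 0 ≤ a) (ha1 : a ≠ 1) :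
    AntitoneOn (hypoexpSurvival a) (Ici 0) := by
  have hderiv (u : ℝ) : HasDerivAt (hypoexpSurvival a)
      (-a * ((exp (-(a * u)) - exp (-u)) / (1 - a))) u := by
    have h1 : HasDerivAt (fun u ↦ exp (-(a * u))) (exp (-(a * u)) * -a) u := by
      simpa using ((hasDerivAt_id u).const_mul a).neg.exp
    have h2 : HasDerivAt (fun u ↦ a * exp (-u)) (a * (exp (-u) * -1)) u :=
      ((hasDerivAt_neg u).exp).const_mul a
    exact ((h1.sub h2).div_const (1 - a)).congr_deriv (by ring)
  refine antitoneOn_of_deriv_nonpos (convex_Ici 0)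
    (fun u _ ↦ (hderiv u).continuousAt.continuousWithinAt)
    (fun u _ ↦ (hderiv u).differentiableAt.differentiableWithinAt) fun u hu ↦ ?_
  rw [interior_Ici, mem_Ioi] at hu
  rw [(hderiv u).deriv, neg_mul]
  refine neg_nonpos.2 (mul_nonneg ha ?_)
  -- `exp (-(a * u)) - exp (-u)` and `1 - a` have the same sign
  rcases lt_or_gt_of_ne ha1 with h | h
  · exact div_nonneg (sub_nonneg.2 (exp_le_exp.2 (by nlinarith))) (by linarith)
  · exact div_nonneg_of_nonpos (sub_nonpos.2 (exp_le_exp.2 (by nlinarith))) (by linarith)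

noncomputable def fdlCompl (t a : ℝ) : ℝ :=
  ((1 + t) ^ (-(a / t)) / (1 + a / t) - a * (1 + t) ^ (-(1 / t)) / (1 + 1 / t)) / (1 - a)

section Integral

variable {t : ℝ}

lemma exp_neg_mul_hypoexpSurvival (a : ℝ) (ht : 0 < t) (s : ℝ) :
    exp (-s) * hypoexpSurvival a ((s + log (1 + t)) / t) =
      ((1 + t) ^ (-(a / t)) * exp (-(1 + a / t) * s)
        - a * ((1 + t) ^ (-(1 / t)) * exp (-(1 + 1 / t) * s))) / (1 - a) := by
  have key (c : ℝ) : exp (-s) * exp (-(c * ((s + log (1 + t)) / t))) =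
      (1 + t) ^ (-(c / t)) * exp (-(1 + c / t) * s) := by
    rw [rpow_def_of_pos (by linarith), ← exp_add, ← exp_add]
    congr 1
    field_simp
    ring
  rw [← key a, ← key 1, hypoexpSurvival, one_mul]
  ring

lemma integrableOn_exp_neg_mul_hypoexpSurvival {a : ℝ} (ha : 0 ≤ a) (ht : 0 < t) :
    IntegrableOn (fun s ↦ exp (-s) * hypoexpSurvival a ((s + log (1 + t)) / t)) (Ioi 0) := by
  simp_rw [exp_neg_mul_hypoexpSurvival a ht]
  have hexp (c : ℝ) (hc : 0 ≤ c) : IntegrableOn (fun s ↦ exp (-(1 + c) * s)) (Ioi 0) :=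
    integrableOn_exp_mul_Ioi (by linarith) 0
  exact ((((hexp _ (by positivity)).const_mul _).sub
    (((hexp _ (by positivity)).const_mul _).const_mul a)).div_const _)

lemma integral_exp_neg_mul_hypoexpSurvival {a : ℝ} (ha : 0 ≤ a) (ht : 0 < t) :
    ∫ s in Ioi 0, exp (-s) * hypoexpSurvival a ((s + log (1 + t)) / t) = fdlCompl t a := by
  have hexp (c : ℝ) (hc : 0 ≤ c) : ∫ s in Ioi 0, exp (-(1 + c) * s) = 1 / (1 + c) := by
    rw [integral_exp_mul_Ioi (by linarith), mul_zero, exp_zero, div_neg, neg_div, neg_neg]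
  have hint (c : ℝ) (hc : 0 ≤ c) : IntegrableOn (fun s ↦ exp (-(1 + c) * s)) (Ioi 0) :=
    integrableOn_exp_mul_Ioi (by linarith) 0
  have hat : 0 ≤ a / t := by positivity
  have h1t : 0 ≤ 1 / t := by positivity
  simp_rw [exp_neg_mul_hypoexpSurvival a ht]
  rw [integral_div,
    integral_sub ((hint _ hat).const_mul _) (((hint _ h1t).const_mul _).const_mul a),
    integral_const_mul, integral_const_mul, integral_const_mul, hexp _ hat, hexp _ h1t, fdlCompl]
  ring

end Integral

lemma log_one_add_div_le {t t' : ℝ} (ht' : 0 < t') (h : t' ≤ t) :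
    log (1 + t) / t ≤ log (1 + t') / t' := by
  have hbern : 1 + t ≤ (1 + t') ^ (t / t') := by
    simpa [div_mul_cancel₀ t ht'.ne'] using
      one_add_mul_self_le_rpow_one_add (by linarith : (-1 : ℝ) ≤ t') ((one_le_div ht').2 h)
  have hlog := log_le_log (by linarith) hbern
  rw [log_rpow (by linarith)] at hlog
  rw [div_le_div_iff₀ (by linarith) ht']
  calc log (1 + t) * t' ≤ t / t' * log (1 + t') * t' := by gcongr
    _ = log (1 + t') * t := by field_simp

lemma fdlCompl_le_fdlCompl {a t t' : ℝ} (ha : 0 ≤ a) (ha1 : a ≠ 1) (ht' : 0 < t') (h : t' ≤ t) :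
    fdlCompl t' a ≤ fdlCompl t a := by
  have ht : 0 < t := ht'.trans_le h
  rw [← integral_exp_neg_mul_hypoexpSurvival ha ht, ← integral_exp_neg_mul_hypoexpSurvival ha ht']
  refine setIntegral_mono_on (integrableOn_exp_neg_mul_hypoexpSurvival ha ht')
    (integrableOn_exp_neg_mul_hypoexpSurvival ha ht) measurableSet_Ioi fun s hs ↦ ?_
  have hs : 0 ≤ s := le_of_lt hs
  have harg : (s + log (1 + t)) / t ≤ (s + log (1 + t')) / t' := by
    rw [add_div, add_div]
    exact add_le_add (by gcongr) (log_one_add_div_le ht' h)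
  gcongr
  exact hypoexpSurvival_antitoneOn ha ha1
    (div_nonneg (add_nonneg hs (log_nonneg (by linarith))) ht.le)
    (div_nonneg (add_nonneg hs (log_nonneg (by linarith))) ht'.le) harg

lemma Fdl_eq_one_sub_fdlCompl {Pr Pb φ1 N : ℝ} (hPr : 0 < Pr) (hPb : 0 < Pb) (hφ1 : 0 < φ1)
    (hN : 0 < N) (hne : φ1 ≠ N) : Fdl Pr Pb φ1 N = 1 - fdlCompl (Pb / Pr) (N / φ1) := by
  obtain ⟨t, ht, rfl⟩ : ∃ t, 0 < t ∧ Pb = t * Pr := ⟨Pb / Pr, by positivity, by field_simp⟩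
  obtain ⟨a, ha, rfl⟩ : ∃ a, 0 < a ∧ N = a * φ1 := ⟨N / φ1, by positivity, by field_simp⟩
  have ha1 : 1 - a ≠ 0 := sub_ne_zero.2 fun h ↦ hne (by rw [← h, one_mul])
  have h1t : 0 < 1 + t := by linarith
  have hpow (x : ℝ) : (1 + t) ^ (-(1 + x)) = (1 + t) ^ (-x) / (1 + t) := by
    rw [neg_add, rpow_add h1t, rpow_neg_one, div_eq_mul_inv, mul_comm]
  have hB : (1 + t) ^ (-(1 / t)) ≠ 0 := by positivity
  rw [mul_div_cancel_right₀ t hPr.ne', mul_div_cancel_right₀ a hφ1.ne', Fdl,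
    show (Pr + t * Pr) / Pr = 1 + t by field_simp,
    show Pr * (a * φ1) / (t * Pr * φ1) = a / t by field_simp,
    show t * Pr * φ1 / (Pr * (a * φ1)) = t / a by field_simp,
    show (Pr + t * Pr) / (t * Pr) = 1 + 1 / t by field_simp; ring,
    show Pr / (t * Pr) * (1 - a * φ1 / φ1) = -(a / t) - -(1 / t) by field_simp; ring,
    show φ1 / (a * φ1) - 1 = (1 - a) / a by field_simp,
    hpow, hpow, rpow_sub h1t, fdlCompl]
  -- the identity is now rational in `A = (1 + t) ^ (-(a / t))` and `B = (1 + t) ^ (-(1 / t))`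
  generalize (1 + t) ^ (-(a / t)) = A
  generalize (1 + t) ^ (-(1 / t)) = B at hB
  field_simp
  ring

lemma Fdl_monotoneOn {Pb φ1 N : ℝ} (hPb : 0 < Pb) (hφ1 : 0 < φ1) (hN : 0 < N) (hne : φ1 ≠ N) :
    MonotoneOn (fun Pr ↦ Fdl Pr Pb φ1 N) (Ioi 0) := by
  intro Pr hPr Pr' hPr' h
  have ha1 : N / φ1 ≠ 1 := fun hone ↦ hne ((div_eq_one_iff_eq hφ1.ne').1 hone).symm
  simp only [Fdl_eq_one_sub_fdlCompl hPr hPb hφ1 hN hne,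
    Fdl_eq_one_sub_fdlCompl hPr' hPb hφ1 hN hne, sub_le_sub_iff_left]
  exact fdlCompl_le_fdlCompl (by positivity) ha1 (div_pos hPb hPr') (by gcongr)

lemma FeasibleP2.fullPower {Gr σ2 γ ε Pmax φ1 N : ℝ} {p : ℝ × ℝ} (hGr : 0 ≤ Gr) (hφ1 : 0 < φ1)
    (hN : 0 < N) (hne : φ1 ≠ N) (hp : FeasibleP2 Gr σ2 γ ε Pmax φ1 N p) :
    FeasibleP2 Gr σ2 γ ε Pmax φ1 N (Pmax - p.2, p.2) := by
  obtain ⟨hPr, hPb, hsum, hord, hqos, hcov⟩ := hp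
  have hle : p.1 ≤ Pmax - p.2 := by linarith
  exact ⟨by linarith, hPb, le_of_eq (sub_add_cancel _ _), hord.trans hle,
    hqos.trans (by gcongr), hcov.trans (Fdl_monotoneOn hPb hφ1 hN hne hPr (hPr.trans_le hle) hle)⟩

theorem P2_max_attained_at_full_power_general
    (Gb Gr σ2 γ ε Pmax φ1 N : ℝ)
    (hGr : 0 ≤ Gr)
    (hφ1 : 0 < φ1) (hN : 0 < N)
    (hne : φ1 ≠ N)
    (Pr Pb : ℝ) (hPr : 0 < Pr) (hPb : 0 < Pb)
    (hsum : Pr + Pb ≤ Pmax) (hord : Pb ≤ Pr)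
    (hqos : γ * (Pb * Gr + σ2) ≤ Pr * Gr)
    (hcov : 1 - ε ≤ Fdl Pr Pb φ1 N) :
    (Pb ≤ Pmax - Pb ∧ (Pmax - Pb) + Pb = Pmax ∧
      γ * (Pb * Gr + σ2) ≤ (Pmax - Pb) * Gr ∧
      1 - ε ≤ Fdl (Pmax - Pb) Pb φ1 N ∧
      Real.logb 2 (1 + Pb * Gb / σ2) = Real.logb 2 (1 + Pb * Gb / σ2)) ∧
    ((∃ p, FeasibleP2 Gr σ2 γ ε Pmax φ1 N p ∧
        ∀ q, FeasibleP2 Gr σ2 γ ε Pmax φ1 N q →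
          Real.logb 2 (1 + q.2 * Gb / σ2) ≤ Real.logb 2 (1 + p.2 * Gb / σ2)) →
      ∃ p, FeasibleP2 Gr σ2 γ ε Pmax φ1 N p ∧ p.1 + p.2 = Pmax ∧
        ∀ q, FeasibleP2 Gr σ2 γ ε Pmax φ1 N q →
          Real.logb 2 (1 + q.2 * Gb / σ2) ≤ Real.logb 2 (1 + p.2 * Gb / σ2)) := by
  obtain ⟨-, -, -, hord', hqos', hcov'⟩ : FeasibleP2 Gr σ2 γ ε Pmax φ1 N (Pmax - Pb, Pb) :=
    FeasibleP2.fullPower hGr hφ1 hN hne (p := (Pr, Pb)) ⟨hPr, hPb, hsum, hord, hqos, hcov⟩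
  refine ⟨⟨hord', sub_add_cancel _ _, hqos', hcov', rfl⟩, ?_⟩
  rintro ⟨p, hp, hopt⟩
  exact ⟨(Pmax - p.2, p.2), hp.fullPower hGr hφ1 hN hne, sub_add_cancel _ _, hopt⟩

/-- Proposition 1 of the paper: replacing `P_r` by `P_max − P_b` preserves feasibility of
problem (P2) and the covert-rate objective; consequently, whenever (P2) attains its
maximum, it attains it at a point with full power `P_r + P_b = P_max`. -/
theorem P2_max_attained_at_full_power
    (Gb Gr σ2 γ ε Pmax φ1 N : ℝ)
    (hGb : 0 ≤ Gb) (hGr : 0 ≤ Gr) (hσ2 : 0 < σ2) (hγ : 0 ≤ γ)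
    (hε : ε ∈ Set.Ioo (0 : ℝ) 1) (hPmax : 0 < Pmax) (hφ1 : 0 < φ1) (hN : 0 < N)
    (hne : φ1 ≠ N)
    (Pr Pb : ℝ) (hPr : 0 < Pr) (hPb : 0 < Pb)
    (hsum : Pr + Pb ≤ Pmax) (hord : Pb ≤ Pr)
    (hqos : γ * (Pb * Gr + σ2) ≤ Pr * Gr)
    (hcov : 1 - ε ≤ Fdl Pr Pb φ1 N) :
    (Pb ≤ Pmax - Pb ∧ (Pmax - Pb) + Pb = Pmax ∧
      γ * (Pb * Gr + σ2) ≤ (Pmax - Pb) * Gr ∧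
      1 - ε ≤ Fdl (Pmax - Pb) Pb φ1 N ∧
      Real.logb 2 (1 + Pb * Gb / σ2) = Real.logb 2 (1 + Pb * Gb / σ2)) ∧
    ((∃ p, FeasibleP2 Gr σ2 γ ε Pmax φ1 N p ∧
        ∀ q, FeasibleP2 Gr σ2 γ ε Pmax φ1 N q →
          Real.logb 2 (1 + q.2 * Gb / σ2) ≤ Real.logb 2 (1 + p.2 * Gb / σ2)) →
      ∃ p, FeasibleP2 Gr σ2 γ ε Pmax φ1 N p ∧ p.1 + p.2 = Pmax ∧
        ∀ q, FeasibleP2 Gr σ2 γ ε Pmax φ1 N q →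
          Real.logb 2 (1 + q.2 * Gb / σ2) ≤ Real.logb 2 (1 + p.2 * Gb / σ2)) :=
  P2_max_attained_at_full_power_general Gb Gr σ2 γ ε Pmax φ1 N hGr hφ1 hN hne Pr Pb hPr hPb hsum
    hord hqos hcov
end

section
/- Set κ̃ = (P̃_r·m₁ + P̃_b·m₂)/(P̃_r·m₁) and define τ* = σ² + P̃_r·w₁ + P̃_b·w₂ if w₂ ≥ (P̃_r·m₁/P̃_b)·ln κ̃, and τ* = σ² + P̃_r·w₁ − P̃_r·(m₁/m₂)·w₂ + (P̃_r·m₁·(P̃_r·m₁ + P̃_b·m₂)/(P̃_b·m₂))·ln κ̃ otherwise. Then ξ_ul(τ*) = exp(−P̃_b·w₂/(P̃_r·m₁)) if w₂ ≥ (P̃_r·m₁/P̃_b)·ln κ̃, and ξ_ul(τ*) = 1 − (P̃_b·m₂/(P̃_r·m₁))·κ̃^{−(P̃_r·m₁+P̃_b·m₂)/(P̃_b·m₂)}·exp(w₂/m₂) otherwise. -/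
/-!
If `w₂ ≥ (P̃_r m₁ / P̃_b) ln κ̃`, the threshold `τ*` is the upper breakpoint of `ξ_ul`, where the
middle branch `ν₃` applies. Otherwise `τ*` is the stationary point of the last branch
`1 + ν₃ - ν₄`: since `ν₃' = -ν₃ / (P̃_r m₁)` and `ν₄' = -ν₄ / (P̃_r m₁ + P̃_b m₂)`, it is the point
where `ν₄ = κ̃ ν₃`, so that `ξ_ul(τ*) = 1 - (κ̃ - 1) ν₃(τ*)`. The condition on `w₂` says exactly
that this point lies beyond the breakpoint.
-/

open Real

/-- `ν₃(τ)` of the paper (eq. (27)). -/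
noncomputable def nu3 (Pr m1 w1 σ2 τ : ℝ) : ℝ :=
  Real.exp ((σ2 + Pr * w1 - τ) / (Pr * m1))

/-- `ν₄(τ)` of the paper (eq. (28)). -/
noncomputable def nu4 (Pr Pb m1 m2 w1 w2 σ2 τ : ℝ) : ℝ :=
  Real.exp ((σ2 + Pr * w1 + Pb * w2 - τ) / (Pr * m1 + Pb * m2))

/-- The uplink detection error probability `ξ_{w,ul}(τ)` of the paper (eq. (30)). -/
noncomputable def xiUl (Pr Pb m1 m2 w1 w2 σ2 τ : ℝ) : ℝ :=
  if τ < σ2 + Pr * w1 then 1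
  else if τ ≤ σ2 + Pr * w1 + Pb * w2 then nu3 Pr m1 w1 σ2 τ
  else 1 + nu3 Pr m1 w1 σ2 τ - nu4 Pr Pb m1 m2 w1 w2 σ2 τ

noncomputable def kappa (Pr Pb m1 m2 : ℝ) : ℝ :=
  (Pr * m1 + Pb * m2) / (Pr * m1)

/-- The stationary point of `1 + ν₃ - ν₄`. -/
noncomputable def criticalThreshold (Pr Pb m1 m2 w1 w2 σ2 : ℝ) : ℝ :=
  σ2 + Pr * w1 - Pr * (m1 / m2) * w2 +
    (Pr * m1 * (Pr * m1 + Pb * m2) / (Pb * m2)) * Real.log (kappa Pr Pb m1 m2)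

section

variable {Pr Pb m1 m2 w1 w2 σ2 τ : ℝ}

theorem xiUl_eq_nu3 (h₁ : σ2 + Pr * w1 ≤ τ) (h₂ : τ ≤ σ2 + Pr * w1 + Pb * w2) :
    xiUl Pr Pb m1 m2 w1 w2 σ2 τ = nu3 Pr m1 w1 σ2 τ := by
  rw [xiUl, if_neg h₁.not_gt, if_pos h₂]

theorem xiUl_eq_one_add_nu3_sub_nu4 (h₁ : σ2 + Pr * w1 ≤ τ)
    (h₂ : σ2 + Pr * w1 + Pb * w2 < τ) :
    xiUl Pr Pb m1 m2 w1 w2 σ2 τ = 1 + nu3 Pr m1 w1 σ2 τ - nu4 Pr Pb m1 m2 w1 w2 σ2 τ := by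
  rw [xiUl, if_neg h₁.not_gt, if_neg h₂.not_ge]

theorem xiUl_at_upperBreakpoint (h : 0 ≤ Pb * w2) :
    xiUl Pr Pb m1 m2 w1 w2 σ2 (σ2 + Pr * w1 + Pb * w2) = Real.exp (-(Pb * w2) / (Pr * m1)) := by
  rw [xiUl_eq_nu3 (le_add_of_nonneg_right h) le_rfl, nu3]
  ring_nf

variable (hPr : 0 < Pr) (hPb : 0 < Pb) (hm1 : 0 < m1) (hm2 : 0 < m2)
include hPr hPb hm1 hm2

theorem one_lt_kappa : 1 < kappa Pr Pb m1 m2 := by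
  rw [kappa, one_lt_div (by positivity)]
  nlinarith [mul_pos hPb hm2]

theorem kappa_pos : 0 < kappa Pr Pb m1 m2 :=
  zero_lt_one.trans (one_lt_kappa hPr hPb hm1 hm2)

theorem upperBreakpoint_lt_criticalThreshold
    (h : w2 < Pr * m1 / Pb * Real.log (kappa Pr Pb m1 m2)) :
    σ2 + Pr * w1 + Pb * w2 < criticalThreshold Pr Pb m1 m2 w1 w2 σ2 := by
  have key : criticalThreshold Pr Pb m1 m2 w1 w2 σ2 - (σ2 + Pr * w1 + Pb * w2) =
      (Pr * m1 + Pb * m2) / m2 * (Pr * m1 / Pb * Real.log (kappa Pr Pb m1 m2) - w2) := by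
    rw [criticalThreshold]
    field_simp
    ring
  have hpos : 0 < (Pr * m1 + Pb * m2) / m2 := by positivity
  nlinarith [sub_pos.2 h]

theorem lowerBreakpoint_lt_criticalThreshold
    (h : w2 < Pr * m1 / Pb * Real.log (kappa Pr Pb m1 m2)) :
    σ2 + Pr * w1 < criticalThreshold Pr Pb m1 m2 w1 w2 σ2 := by
  have key : criticalThreshold Pr Pb m1 m2 w1 w2 σ2 - (σ2 + Pr * w1) =
      Pr * m1 / m2 * (Pr * m1 / Pb * Real.log (kappa Pr Pb m1 m2) - w2) +
        Pr * m1 * Real.log (kappa Pr Pb m1 m2) := by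
    rw [criticalThreshold]
    field_simp
    ring
  have hlog : 0 < Real.log (kappa Pr Pb m1 m2) := log_pos (one_lt_kappa hPr hPb hm1 hm2)
  have hpos : 0 < Pr * m1 / m2 := by positivity
  nlinarith [sub_pos.2 h, mul_pos (mul_pos hPr hm1) hlog]

theorem nu3_criticalThreshold :
    nu3 Pr m1 w1 σ2 (criticalThreshold Pr Pb m1 m2 w1 w2 σ2) =
      kappa Pr Pb m1 m2 ^ (-((Pr * m1 + Pb * m2) / (Pb * m2))) * Real.exp (w2 / m2) := by
  rw [nu3, criticalThreshold, rpow_def_of_pos (kappa_pos hPr hPb hm1 hm2), ← exp_add]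
  congr 1
  field_simp
  ring

theorem nu4_criticalThreshold :
    nu4 Pr Pb m1 m2 w1 w2 σ2 (criticalThreshold Pr Pb m1 m2 w1 w2 σ2) =
      kappa Pr Pb m1 m2 * nu3 Pr m1 w1 σ2 (criticalThreshold Pr Pb m1 m2 w1 w2 σ2) := by
  have hκ := kappa_pos hPr hPb hm1 hm2
  rw [nu4, nu3, criticalThreshold, ← exp_log hκ, ← exp_add, exp_log hκ]
  congr 1
  field_simp
  ring

theorem xiUl_at_criticalThreshold (h : w2 < Pr * m1 / Pb * Real.log (kappa Pr Pb m1 m2)) :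
    xiUl Pr Pb m1 m2 w1 w2 σ2 (criticalThreshold Pr Pb m1 m2 w1 w2 σ2) =
      1 - Pb * m2 / (Pr * m1) * kappa Pr Pb m1 m2 ^ (-((Pr * m1 + Pb * m2) / (Pb * m2))) *
        Real.exp (w2 / m2) := by
  rw [xiUl_eq_one_add_nu3_sub_nu4
    (lowerBreakpoint_lt_criticalThreshold hPr hPb hm1 hm2 h).le
    (upperBreakpoint_lt_criticalThreshold hPr hPb hm1 hm2 h),
    nu4_criticalThreshold hPr hPb hm1 hm2,
    nu3_criticalThreshold hPr hPb hm1 hm2, kappa]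
  field_simp
  ring

end

theorem xiUl_at_optimal_threshold_general
    (Pr Pb m1 m2 w1 w2 σ2 : ℝ) (hPr : 0 < Pr) (hPb : 0 < Pb)
    (hm1 : 0 < m1) (hm2 : 0 < m2) :
    let κ : ℝ := (Pr * m1 + Pb * m2) / (Pr * m1)
    let τstar : ℝ :=
      if w2 ≥ (Pr * m1 / Pb) * Real.log κ then σ2 + Pr * w1 + Pb * w2
      else σ2 + Pr * w1 - Pr * (m1 / m2) * w2 +
        (Pr * m1 * (Pr * m1 + Pb * m2) / (Pb * m2)) * Real.log κ
    xiUl Pr Pb m1 m2 w1 w2 σ2 τstar =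
      if w2 ≥ (Pr * m1 / Pb) * Real.log κ then Real.exp (-(Pb * w2) / (Pr * m1))
      else 1 - (Pb * m2 / (Pr * m1)) * κ ^ (-((Pr * m1 + Pb * m2) / (Pb * m2))) *
        Real.exp (w2 / m2) := by
  intro κ τstar
  by_cases h : w2 ≥ Pr * m1 / Pb * Real.log κ
  · have hlog : 0 < Real.log κ := log_pos (one_lt_kappa hPr hPb hm1 hm2)
    have hw2 : 0 ≤ w2 := le_trans (by positivity) h
    simp only [τstar, if_pos h]
    exact xiUl_at_upperBreakpoint (mul_nonneg hPb.le hw2)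
  · simp only [τstar, if_neg h]
    exact xiUl_at_criticalThreshold hPr hPb hm1 hm2 (not_le.1 h)

/-- Equation (31) of the paper: the value of the uplink detection error probability at the
optimal detection threshold `τ*` of Theorem 3. -/
theorem xiUl_at_optimal_threshold
    (Pr Pb m1 m2 w1 w2 σ2 : ℝ) (hPr : 0 < Pr) (hPb : 0 < Pb)
    (hm1 : 0 < m1) (hm2 : 0 < m2) (hw1 : 0 ≤ w1) (hw2 : 0 ≤ w2) (hσ2 : 0 ≤ σ2) :
    let κ : ℝ := (Pr * m1 + Pb * m2) / (Pr * m1)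
    let τstar : ℝ :=
      if w2 ≥ (Pr * m1 / Pb) * Real.log κ then σ2 + Pr * w1 + Pb * w2
      else σ2 + Pr * w1 - Pr * (m1 / m2) * w2 +
        (Pr * m1 * (Pr * m1 + Pb * m2) / (Pb * m2)) * Real.log κ
    xiUl Pr Pb m1 m2 w1 w2 σ2 τstar =
      if w2 ≥ (Pr * m1 / Pb) * Real.log κ then Real.exp (-(Pb * w2) / (Pr * m1))
      else 1 - (Pb * m2 / (Pr * m1)) * κ ^ (-((Pr * m1 + Pb * m2) / (Pb * m2))) *
        Real.exp (w2 / m2) :=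
  xiUl_at_optimal_threshold_general Pr Pb m1 m2 w1 w2 σ2 hPr hPb hm1 hm2
end

section
/- Let T = (P̃_r·N/(P̃_b·φ₃))·ln κ̃ and define f : [0,∞) → ℝ by f(x) = exp(−P̃_b·φ₃·x/(P̃_r·N)) for x ≥ T, and f(x) = 1 − (P̃_b/(P̃_r·φ₂))·κ̃^{−(P̃_r·φ₂+P̃_b)/P̃_b}·exp(φ₄·x/N) for 0 ≤ x < T. Then ∫₀^∞ f(x)·e^{−x} dx = F_ul(P̃_r, P̃_b). -/
open Real Filter MeasureTheory

/-! Split the integral at the threshold `T`: beyond it the integrand is `e^{-(a+1)x}`, below it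
`e^{-x} - C e^{(b-1)x}`, and both integrate in closed form. Since `T` is a multiple of `log κ`,
every exponential evaluated at `T` is a power of `κ`, which gives `F_ul`. -/

/-- The closed-form minimum average detection error probability of Theorem 4 of the paper
(eq. (32)). -/
noncomputable def Ful (Pr Pb φ2 φ3 φ4 N : ℝ) : ℝ :=
  ((Pr * φ2 + Pb) / (Pr * φ2)) ^ (-(1 + Pr * N / (Pb * φ3))) / (Pb * φ3 / (Pr * N) + 1) +
    1 - ((Pr * φ2 + Pb) / (Pr * φ2)) ^ (-(Pr * N / (Pb * φ3))) -
    ((Pb / (Pr * φ2)) * ((Pr * φ2 + Pb) / (Pr * φ2)) ^ (-((Pr * φ2 + Pb) / Pb)) /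
        (φ4 / N - 1)) *
      (((Pr * φ2 + Pb) / (Pr * φ2)) ^ ((Pr / Pb) * (φ2 - N / φ3)) - 1)

theorem integral_exp_mul {c : ℝ} (hc : c ≠ 0) (a b : ℝ) :
    ∫ x in a..b, exp (c * x) = (exp (c * b) - exp (c * a)) / c := by
  rw [intervalIntegral.integral_comp_mul_left (fun x => exp x) hc, integral_exp, smul_eq_mul,
    inv_mul_eq_div]

theorem setIntegral_Ioi_ite_le {E : Type*} [NormedAddCommGroup E] [NormedSpace ℝ E]
    {a T : ℝ} {g h : ℝ → E} (haT : a ≤ T)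
    (hg : IntegrableOn g (Set.Ioi T)) (hh : IntervalIntegrable h volume a T) :
    ∫ x in Set.Ioi a, (if T ≤ x then g x else h x) =
      (∫ x in a..T, h x) + ∫ x in Set.Ioi T, g x := by
  have below : Set.EqOn (fun x => if T ≤ x then g x else h x) h (Set.Ioo a T) :=
    fun x hx => if_neg (not_le.2 hx.2)
  have above : Set.EqOn (fun x => if T ≤ x then g x else h x) g (Set.Ioi T) :=
    fun x hx => if_pos hx.le
  have hhIoo : IntegrableOn h (Set.Ioo a T) :=
    ((intervalIntegrable_iff_integrableOn_Ioc_of_le haT).1 hh).mono_set Set.Ioo_subset_Ioc_self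
  have hIoc : IntegrableOn (fun x => if T ≤ x then g x else h x) (Set.Ioc a T) :=
    (integrableOn_Ioc_iff_integrableOn_Ioo (by finiteness)).2
      (hhIoo.congr_fun below.symm measurableSet_Ioo)
  rw [← Set.Ioc_union_Ioi_eq_Ioi haT, setIntegral_union Set.Ioc_disjoint_Ioi_same
      measurableSet_Ioi hIoc (hg.congr_fun above.symm measurableSet_Ioi),
    intervalIntegral.integral_of_le haT, integral_Ioc_eq_integral_Ioo,
    integral_Ioc_eq_integral_Ioo, setIntegral_congr_fun measurableSet_Ioo below,
    setIntegral_congr_fun measurableSet_Ioi above]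

theorem integral_Ioi_ite_exp_mul_exp_neg {a b C T : ℝ} (ha : -1 < a) (hb : b ≠ 1) (hT : 0 ≤ T) :
    ∫ x in Set.Ioi 0, (if T ≤ x then exp (-(a * x)) else 1 - C * exp (b * x)) * exp (-x) =
      exp (-((a + 1) * T)) / (a + 1) + (1 - exp (-T)) -
        C * ((exp ((b - 1) * T) - 1) / (b - 1)) := by
  have hb1 : b - 1 ≠ 0 := sub_ne_zero.2 hb
  have hsplit : ∀ x, (if T ≤ x then exp (-(a * x)) else 1 - C * exp (b * x)) * exp (-x) =
      if T ≤ x then exp (-(a + 1) * x) else exp (-1 * x) - C * exp ((b - 1) * x) := by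
    intro x
    split_ifs
    · rw [← exp_add]; ring_nf
    · rw [sub_mul, mul_assoc, ← exp_add]; ring_nf
  simp_rw [hsplit]
  rw [setIntegral_Ioi_ite_le hT (integrableOn_exp_mul_Ioi (by linarith) T)
      (Continuous.intervalIntegrable (by fun_prop) _ _),
    intervalIntegral.integral_sub (Continuous.intervalIntegrable (by fun_prop) _ _)
      (Continuous.intervalIntegrable (by fun_prop) _ _),
    intervalIntegral.integral_const_mul, integral_exp_mul (neg_ne_zero.2 one_ne_zero),
    integral_exp_mul hb1,
    integral_exp_mul_Ioi (by linarith)]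
  simp only [mul_zero, exp_zero]
  field_simp
  ring

theorem integral_min_detection_error_eq_Ful_general
    (Pr Pb φ2 φ3 φ4 N : ℝ) (hPr : 0 < Pr) (hPb : 0 < Pb)
    (hφ2 : 0 < φ2) (hφ3 : 0 < φ3) (hN : 0 < N)
    (hprod : φ4 = φ2 * φ3) (hne : φ4 ≠ N) :
    let κ : ℝ := (Pr * φ2 + Pb) / (Pr * φ2)
    let T : ℝ := (Pr * N / (Pb * φ3)) * Real.log κ
    let f : ℝ → ℝ := fun x =>
      if T ≤ x then Real.exp (-(Pb * φ3 * x) / (Pr * N))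
      else 1 - (Pb / (Pr * φ2)) * κ ^ (-((Pr * φ2 + Pb) / Pb)) * Real.exp (φ4 * x / N)
    ∫ x in Set.Ioi (0 : ℝ), f x * Real.exp (-x) = Ful Pr Pb φ2 φ3 φ4 N := by
  intro κ T f
  have hκ : 1 < κ := (one_lt_div (by positivity)).2 (by linarith)
  have hT : 0 < T := mul_pos (by positivity) (log_pos hκ)
  have hf : ∀ x, f x = if T ≤ x then exp (-(Pb * φ3 / (Pr * N) * x))
      else 1 - (Pb / (Pr * φ2)) * κ ^ (-((Pr * φ2 + Pb) / Pb)) * exp (φ4 / N * x) := by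
    intro x
    simp only [f, neg_div, mul_div_right_comm]
  simp_rw [hf]
  rw [integral_Ioi_ite_exp_mul_exp_neg (by linarith [show 0 < Pb * φ3 / (Pr * N) by positivity])
    (fun h => hne ((div_eq_one_iff_eq hN.ne').1 h)) hT.le]
  have hexp : ∀ r, exp (log κ * r) = κ ^ r := fun r => (rpow_def_of_pos (by linarith) r).symm
  rw [show -((Pb * φ3 / (Pr * N) + 1) * T) = log κ * -(1 + Pr * N / (Pb * φ3)) by
      simp only [T]; field_simp,
    show -T = log κ * -(Pr * N / (Pb * φ3)) by simp only [T]; ring,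
    show (φ4 / N - 1) * T = log κ * (Pr / Pb * (φ2 - N / φ3)) by
      simp only [T, hprod]; field_simp,
    hexp, hexp, hexp, Ful]
  ring

/-- Theorem 4 of the paper: averaging the uplink minimum detection error probability
(eq. (31)) against the exponential density of the direct channel gain gives the closed
form `F_ul`. -/
theorem integral_min_detection_error_eq_Ful
    (Pr Pb φ2 φ3 φ4 N : ℝ) (hPr : 0 < Pr) (hPb : 0 < Pb)
    (hφ2 : 0 < φ2) (hφ3 : 0 < φ3) (hφ4 : 0 < φ4) (hN : 0 < N)
    (hprod : φ4 = φ2 * φ3) (hne : φ4 ≠ N) :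
    let κ : ℝ := (Pr * φ2 + Pb) / (Pr * φ2)
    let T : ℝ := (Pr * N / (Pb * φ3)) * Real.log κ
    let f : ℝ → ℝ := fun x =>
      if T ≤ x then Real.exp (-(Pb * φ3 * x) / (Pr * N))
      else 1 - (Pb / (Pr * φ2)) * κ ^ (-((Pr * φ2 + Pb) / Pb)) * Real.exp (φ4 * x / N)
    ∫ x in Set.Ioi (0 : ℝ), f x * Real.exp (-x) = Ful Pr Pb φ2 φ3 φ4 N :=
  integral_min_detection_error_eq_Ful_general Pr Pb φ2 φ3 φ4 N hPr hPb hφ2 hφ3 hN hprod hne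
end

section
/- For fixed P̃_r, φ₂, φ₃, φ₄, N > 0 with φ₄ = φ₂·φ₃ and φ₄ ≠ N, the closed-form minimum average detection error probability tends to zero as the covert transmit power grows: F_ul(P̃_r, P̃_b) → 0 as P̃_b → ∞. -/
open Real Filter MeasureTheory

/-!
Write `κ = (c + P̃_b) / c` with `c = P̃_r φ₂`, so that `κ → ∞`. Every exponent in `F_ul` is, up
to a shift by `-1`, of the form `a / P̃_b = a / (c κ - c)`, and `κ ^ (a / (c κ - c)) → 1`. Hence
the first term behaves like `κ⁻¹ / P̃_b → 0`, the next two cancel in the limit, and the last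
one is a bounded factor times `κ ^ (P̃_r (φ₂ - N / φ₃) / P̃_b) - 1 → 0`.
-/

open Topology

lemma tendsto_add_div_atTop {c : ℝ} (hc : 0 < c) :
    Tendsto (fun t : ℝ => (c + t) / c) atTop atTop :=
  (tendsto_atTop_add_const_left atTop c tendsto_id).atTop_div_const hc

lemma tendsto_add_div_rpow_div {c : ℝ} (hc : 0 < c) (a : ℝ) :
    Tendsto (fun t : ℝ => ((c + t) / c) ^ (a / t)) atTop (𝓝 1) := by
  refine ((tendsto_rpow_div_mul_add a c (-c) hc.ne).comp (tendsto_add_div_atTop hc)).congr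
    fun t => ?_
  simp only [Function.comp_apply]
  congr 2
  field_simp
  ring

lemma Ful_eq_of_pos {Pr Pb φ2 φ3 φ4 N : ℝ} (hc : 0 < Pr * φ2) (hPb : 0 < Pb) :
    Ful Pr Pb φ2 φ3 φ4 N =
      let κ := (Pr * φ2 + Pb) / (Pr * φ2)
      κ⁻¹ * κ ^ (-(Pr * N / φ3) / Pb) / (Pb * φ3 / (Pr * N) + 1) + 1 -
        κ ^ (-(Pr * N / φ3) / Pb) -
        (1 - κ⁻¹) * κ ^ (-(Pr * φ2) / Pb) / (φ4 / N - 1) *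
          (κ ^ (Pr * (φ2 - N / φ3) / Pb) - 1) := by
  dsimp only
  unfold Ful
  set κ := (Pr * φ2 + Pb) / (Pr * φ2) with hκdef
  have hκ : 0 < κ := by positivity
  have hsplit (a : ℝ) : κ ^ (-1 + a) = κ⁻¹ * κ ^ a := by
    rw [rpow_add hκ, rpow_neg_one]
  have hfirst : κ ^ (-(1 + Pr * N / (Pb * φ3))) = κ⁻¹ * κ ^ (-(Pr * N / φ3) / Pb) := by
    rw [← hsplit]; ring_nf
  have hlast : Pb / (Pr * φ2) * κ ^ (-((Pr * φ2 + Pb) / Pb)) =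
      (1 - κ⁻¹) * κ ^ (-(Pr * φ2) / Pb) := by
    have hexp : -((Pr * φ2 + Pb) / Pb) = -1 + -(Pr * φ2) / Pb := by field_simp; ring
    have hcoef : Pb / (Pr * φ2) * κ⁻¹ = 1 - κ⁻¹ := by
      rw [hκdef, inv_div]
      field_simp [(by positivity : Pr * φ2 + Pb ≠ 0)]
      rw [mul_assoc, mul_div_cancel_right₀ _ hc.ne']
      ring
    rw [hexp, hsplit, ← mul_assoc, hcoef]
  rw [hfirst, hlast]
  ring_nf

theorem Ful_tendsto_zero_as_Pb_atTop_general
    (Pr φ2 φ3 φ4 N : ℝ) (hPr : 0 < Pr)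
    (hφ2 : 0 < φ2) (hφ3 : 0 < φ3) (hN : 0 < N) :
    Tendsto (fun Pb => Ful Pr Pb φ2 φ3 φ4 N) atTop (nhds 0) := by
  have hc : 0 < Pr * φ2 := by positivity
  have hκ_inv : Tendsto (fun t => ((Pr * φ2 + t) / (Pr * φ2))⁻¹) atTop (𝓝 0) :=
    (tendsto_add_div_atTop hc).inv_tendsto_atTop
  have hpow := tendsto_add_div_rpow_div hc
  have hden : Tendsto (fun t : ℝ => t * φ3 / (Pr * N) + 1) atTop atTop :=
    tendsto_atTop_add_const_right _ 1
      ((tendsto_id.atTop_mul_const hφ3).atTop_div_const (by positivity))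
  have hfirst := (hκ_inv.mul (hpow (-(Pr * N / φ3)))).div_atTop hden
  have hlast := ((((tendsto_const_nhds (x := (1 : ℝ))).sub hκ_inv).mul
    (hpow (-(Pr * φ2)))).div_const (φ4 / N - 1)).mul ((hpow (Pr * (φ2 - N / φ3))).sub_const 1)
  have hlim := ((hfirst.add_const 1).sub (hpow (-(Pr * N / φ3)))).sub hlast
  rw [sub_zero, one_mul, sub_self, mul_zero, sub_zero, zero_add, sub_self] at hlim
  refine hlim.congr' ?_
  filter_upwards [eventually_gt_atTop 0] with t ht
  rw [Ful_eq_of_pos hc ht]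

/-- Claim 1) of Remark 5 of the paper: the uplink minimum average detection error
probability tends to zero as the covert transmit power grows. -/
theorem Ful_tendsto_zero_as_Pb_atTop
    (Pr φ2 φ3 φ4 N : ℝ) (hPr : 0 < Pr)
    (hφ2 : 0 < φ2) (hφ3 : 0 < φ3) (hφ4 : 0 < φ4) (hN : 0 < N)
    (hprod : φ4 = φ2 * φ3) (hne : φ4 ≠ N) :
    Tendsto (fun Pb => Ful Pr Pb φ2 φ3 φ4 N) atTop (nhds 0) :=
  Ful_tendsto_zero_as_Pb_atTop_general Pr φ2 φ3 φ4 N hPr hφ2 hφ3 hN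
end

section
/- Let 0 < c₁ < c₂ and A, B ∈ ℝ. Define g : ℝ → ℝ by g(τ) = 1 + exp((A − τ)/c₁) − exp((B − τ)/c₂), and let τ† = (c₁·c₂/(c₂ − c₁))·(A/c₁ − B/c₂ + ln(c₂/c₁)). Then g is strictly decreasing on (−∞, τ†] and strictly increasing on [τ†, ∞); in particular, τ† is the unique global minimizer of g on ℝ. -/
/-!
Writing `exp x / c = exp (x - log c)`, the derivative of `g` is `exp v₂(τ) - exp v₁(τ)` with
`v₁(τ) = (A - τ)/c₁ - log c₁` and `v₂(τ) = (B - τ)/c₂ - log c₂`, and `τ†` is exactly the point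
where these affine functions cross: `v₁ - v₂ = (1/c₁ - 1/c₂)(τ† - τ)`. Since `c₁ < c₂`, `g'` is negative
left of `τ†` and positive right of it.
-/

open Real Set

theorem lt_of_strictAntiOn_Iic_of_strictMonoOn_Ici {α β : Type*} [LinearOrder α] [Preorder β]
    {f : α → β} {a x : α} (hanti : StrictAntiOn f (Iic a)) (hmono : StrictMonoOn f (Ici a))
    (hx : x ≠ a) : f a < f x := by
  rcases hx.lt_or_gt with hlt | hgt
  · exact hanti (mem_Iic.2 hlt.le) self_mem_Iic hlt
  · exact hmono self_mem_Ici (mem_Ici.2 hgt.le) hgt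

theorem strictAntiOn_Iic_and_strictMonoOn_Ici_of_hasDerivAt {f f' : ℝ → ℝ} {a : ℝ}
    (hf : ∀ x, HasDerivAt f (f' x) x) (hneg : ∀ x < a, f' x < 0) (hpos : ∀ x, a < x → 0 < f' x) :
    StrictAntiOn f (Iic a) ∧ StrictMonoOn f (Ici a) := by
  have hcont : ContinuousOn f univ :=
    (continuous_iff_continuousAt.2 fun x => (hf x).continuousAt).continuousOn
  constructor
  · refine strictAntiOn_of_hasDerivWithinAt_neg (convex_Iic a) (hcont.mono (subset_univ _))
      (fun x _ => (hf x).hasDerivWithinAt) fun x hx => hneg x ?_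
    rwa [interior_Iic] at hx
  · refine strictMonoOn_of_hasDerivWithinAt_pos (convex_Ici a) (hcont.mono (subset_univ _))
      (fun x _ => (hf x).hasDerivWithinAt) fun x hx => hpos x ?_
    rwa [interior_Ici] at hx

theorem hasDerivAt_exp_sub_div (A c τ : ℝ) :
    HasDerivAt (fun t => exp ((A - t) / c)) (-(exp ((A - τ) / c) / c)) τ := by
  convert (((hasDerivAt_id' τ).const_sub A).div_const c).exp using 1
  ring

theorem exp_div_lt_exp_div_iff {c₁ c₂ : ℝ} (hc₁ : 0 < c₁) (hc₂ : 0 < c₂) (x y : ℝ) :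
    exp x / c₁ < exp y / c₂ ↔ x - log c₁ < y - log c₂ := by
  rw [← exp_lt_exp (x := x - log c₁), exp_sub, exp_sub, exp_log hc₁, exp_log hc₂]

theorem sub_log_sub_sub_log_eq {c₁ c₂ : ℝ} (hc₁ : c₁ ≠ 0) (hc₂ : c₂ ≠ 0) (hc : c₁ ≠ c₂)
    (A B τ : ℝ) :
    ((A - τ) / c₁ - log c₁) - ((B - τ) / c₂ - log c₂) =
      (c₂ - c₁) / (c₁ * c₂) *
        ((c₁ * c₂ / (c₂ - c₁)) * (A / c₁ - B / c₂ + log (c₂ / c₁)) - τ) := by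
  have : c₂ - c₁ ≠ 0 := sub_ne_zero.2 hc.symm
  rw [log_div hc₂ hc₁]
  field_simp
  ring

/-- The key calculus step of Appendix B of the paper: for `0 < c₁ < c₂`, the function
`g(τ) = 1 + exp((A − τ)/c₁) − exp((B − τ)/c₂)` is strictly decreasing before its
stationary point `τ†` of eq. (A-2) and strictly increasing after it, so `τ†` is the unique
global minimizer. -/
theorem stationary_point_unique_global_min
    (c1 c2 A B : ℝ) (hc1 : 0 < c1) (hc12 : c1 < c2) :
    let g : ℝ → ℝ := fun τ => 1 + Real.exp ((A - τ) / c1) - Real.exp ((B - τ) / c2)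
    let τdag : ℝ := (c1 * c2 / (c2 - c1)) * (A / c1 - B / c2 + Real.log (c2 / c1))
    StrictAntiOn g (Set.Iic τdag) ∧ StrictMonoOn g (Set.Ici τdag) ∧
      ∀ τ : ℝ, τ ≠ τdag → g τdag < g τ := by
  intro g τdag
  have hc2 : 0 < c2 := hc1.trans hc12
  have hslope : 0 < (c2 - c1) / (c1 * c2) := div_pos (sub_pos.2 hc12) (mul_pos hc1 hc2)
  have hgap := sub_log_sub_sub_log_eq hc1.ne' hc2.ne' hc12.ne A B
  have hderiv : ∀ τ, HasDerivAt g (exp ((B - τ) / c2) / c2 - exp ((A - τ) / c1) / c1) τ :=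
    fun τ => (((hasDerivAt_exp_sub_div A c1 τ).const_add 1).sub
      (hasDerivAt_exp_sub_div B c2 τ)).congr_deriv (by ring)
  obtain ⟨hanti, hmono⟩ := strictAntiOn_Iic_and_strictMonoOn_Ici_of_hasDerivAt hderiv
    (fun τ hτ => by
      rw [sub_neg, exp_div_lt_exp_div_iff hc2 hc1, ← sub_pos, hgap]
      exact mul_pos hslope (sub_pos.2 hτ))
    (fun τ hτ => by
      rw [sub_pos, exp_div_lt_exp_div_iff hc1 hc2, ← sub_neg, hgap]
      exact mul_neg_of_pos_of_neg hslope (sub_neg.2 hτ))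
  exact ⟨hanti, hmono, fun τ hτ => lt_of_strictAntiOn_Iic_of_strictMonoOn_Ici hanti hmono hτ⟩
end
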